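/- arXiv:2205.08253 — 7 statements merged into one kernel-verified Lean document; each statement's English description precedes it below -/
import Mathlib

section
/- Let d ≥ 1 and let f : ℝ^d → ℝ be differentiable with gradient ∇f Lipschitz with constant σ_B ≥ 0, and suppose |f(θ)| ≤ C_J for all θ ∈ ℝ^d, where C_J ≥ 0. Let η₀ > 0 and define η : ℕ → ℝ by η_0 = η₀ and η_t = η₀/t^{2/3} for t ≥ 1. Let v : ℕ → ℝ^d with v_t ≠ 0 for all t, and let θ : ℕ → ℝ^d satisfy the normalized update θ_{t+1} = θ_t + η_t · v_t/‖v_t‖ for all t ≥ 0. Fix an integer T ≥ 1 and a constant C ≥ 0, and suppose Σ_{t=0}^{T−1} ‖v_t − ∇f(θ_t)‖ ≤ √C · T^{2/3}. Then (1/T) Σ_{t=0}^{T−1} ‖∇f(θ_t)‖ ≤ 8√C/T^{1/3} + 6σ_B η₀/T^{2/3} + 9C_J/(η₀ T^{1/3}). -/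
open scoped BigOperators RealInnerProductSpace

/-- Quadratic bound from Lipschitz gradient (with constant `σB` instead of `σB/2`). -/
private lemma sharp_smooth_quad {d : ℕ} (f : EuclideanSpace ℝ (Fin d) → ℝ) (σB : ℝ)
    (hσB : 0 ≤ σB) (hdiff : Differentiable ℝ f)
    (hlip : ∀ x y : EuclideanSpace ℝ (Fin d),
      ‖gradient f x - gradient f y‖ ≤ σB * ‖x - y‖)
    (x y : EuclideanSpace ℝ (Fin d)) :
    |f y - f x - ⟪gradient f x, y - x⟫| ≤ σB * ‖y - x‖ * ‖y - x‖ := by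
  have hfd : ∀ z, fderiv ℝ f z = InnerProductSpace.toDual ℝ _ (gradient f z) := by
    intro z
    rw [gradient, LinearIsometryEquiv.apply_symm_apply]
  have key : ‖f y - f x - (fderiv ℝ f x) (y - x)‖ ≤ (σB * ‖y - x‖) * ‖y - x‖ := by
    apply Convex.norm_image_sub_le_of_norm_fderiv_le' (fun z _ => hdiff.differentiableAt)
      (fun z hz => ?_) (convex_closedBall x ‖y - x‖)
      (Metric.mem_closedBall_self (norm_nonneg _))
      (by simp [Metric.mem_closedBall, dist_eq_norm])
    rw [hfd z, hfd x, ← map_sub, LinearIsometryEquiv.norm_map]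
    calc ‖gradient f z - gradient f x‖ ≤ σB * ‖z - x‖ := hlip z x
      _ ≤ σB * ‖y - x‖ := by
          apply mul_le_mul_of_nonneg_left _ hσB
          simpa [dist_eq_norm] using hz
  rw [hfd x, InnerProductSpace.toDual_apply_apply] at key
  calc |f y - f x - ⟪gradient f x, y - x⟫| = ‖f y - f x - ⟪gradient f x, y - x⟫‖ := rfl
    _ ≤ σB * ‖y - x‖ * ‖y - x‖ := by linarith [key]

/-- Correlation of the gradient with the normalized estimate. -/
private lemma sharp_dir {d : ℕ} (g v : EuclideanSpace ℝ (Fin d)) (hv : v ≠ 0) :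
    ‖g‖ - 2 * ‖v - g‖ ≤ ⟪g, ‖v‖⁻¹ • v⟫ := by
  have hv' : 0 < ‖v‖ := norm_pos_iff.2 hv
  have h1 : ⟪g, ‖v‖⁻¹ • v⟫ = ‖v‖⁻¹ * ⟪g, v⟫ := real_inner_smul_right g v _
  have h2 : ⟪g, v⟫ = ⟪v, v⟫ - ⟪v - g, v⟫ := by
    rw [inner_sub_left]; ring
  have h3 : ⟪v - g, v⟫ ≤ ‖v - g‖ * ‖v‖ := real_inner_le_norm _ _
  have h4 : ⟪v, v⟫ = ‖v‖ * ‖v‖ := real_inner_self_eq_norm_mul_norm v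
  have h5 : ‖g‖ - ‖v - g‖ ≤ ‖v‖ := by
    have := norm_sub_norm_le g v
    have := norm_sub_rev g v
    linarith
  have h6 : ‖v‖⁻¹ * ⟪g, v⟫ ≥ ‖v‖ - ‖v - g‖ := by
    rw [h2, h4]
    rw [ge_iff_le, ← sub_nonneg]
    have : ‖v‖⁻¹ * (‖v‖ * ‖v‖ - ⟪v - g, v⟫) - (‖v‖ - ‖v - g‖)
        = ‖v‖⁻¹ * (‖v - g‖ * ‖v‖ - ⟪v - g, v⟫) := by
      field_simp
      ring
    rw [this]
    exact mul_nonneg (inv_nonneg.2 hv'.le) (by linarith)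
  linarith [h1, h6]

/-- Integral-comparison step: `(n+1)^(-2/3) ≤ 3 ((n+1)^(1/3) - n^(1/3))`. -/
private lemma sharp_step_ineq (n : ℕ) :
    (1 : ℝ) / ((n : ℝ) + 1) ^ ((2 : ℝ) / 3)
      ≤ 3 * (((n : ℝ) + 1) ^ ((1 : ℝ) / 3) - (n : ℝ) ^ ((1 : ℝ) / 3)) := by
  set x : ℝ := (n : ℝ) + 1 with hx
  have hy : (0 : ℝ) ≤ (n : ℝ) := Nat.cast_nonneg n
  have hxpos : (0 : ℝ) < x := by positivity
  have amgm : (n : ℝ) ^ ((1 : ℝ) / 3) * x ^ ((2 : ℝ) / 3)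
      ≤ (1 / 3) * (n : ℝ) + (2 / 3) * x :=
    Real.geom_mean_le_arith_mean2_weighted (by norm_num) (by norm_num) hy hxpos.le (by norm_num)
  have hxx : x ^ ((1 : ℝ) / 3) * x ^ ((2 : ℝ) / 3) = x := by
    rw [← Real.rpow_add hxpos]
    norm_num
  have h23 : (0 : ℝ) < x ^ ((2 : ℝ) / 3) := Real.rpow_pos_of_pos hxpos _
  rw [div_le_iff₀ h23]
  nlinarith [amgm, hxx, hx]

/-- Abel-summation bound for `∑ (b (t+1) - b t) * a t` with `|b| ≤ CJ` and `a` monotone. -/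
private lemma sharp_abel (b a : ℕ → ℝ) (CJ : ℝ) (hb : ∀ t, |b t| ≤ CJ)
    (ha0 : ∀ t, 0 ≤ a t) (hamono : Monotone a) (T : ℕ) (hT : 1 ≤ T) :
    ∑ t ∈ Finset.range T, (b (t + 1) - b t) * a t ≤ 2 * CJ * a (T - 1) := by
  have key : ∀ T : ℕ, 1 ≤ T →
      ∑ t ∈ Finset.range T, (b (t + 1) - b t) * a t - b T * a (T - 1) ≤ CJ * a (T - 1) := by
    intro T hT
    induction T, hT using Nat.le_induction with
    | base =>
      simp only [Finset.sum_range_one]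
      have h1 : -b 0 ≤ CJ := by have := abs_le.1 (hb 0); linarith
      have := ha0 0
      nlinarith
    | succ T hT ih =>
      rw [Finset.sum_range_succ]
      have hsimp : T + 1 - 1 = T := rfl
      rw [hsimp]
      have hmt : a (T - 1) ≤ a T := hamono (Nat.sub_le T 1)
      have hbT : |b T| ≤ CJ := hb T
      have h1 : -b T ≤ CJ := by have := abs_le.1 hbT; linarith
      have h2 : b T ≤ CJ := (abs_le.1 hbT).2
      nlinarith [ih, hmt, ha0 (T - 1), ha0 T]
  have h := key T hT
  have hbT : b T ≤ CJ := (abs_le.1 (hb T)).2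
  nlinarith [ha0 (T - 1)]

/-- Algebraic identity used to rescale the final bound. -/
private lemma sharp_alg (A B D u w p e : ℝ) (hu : u ≠ 0) (hw : w ≠ 0) (he : e ≠ 0)
    (h : u * w = p) :
    p * (A / u + B / w + D / (e * u)) = A * w + B * u + D * w / e := by
  subst h
  field_simp

set_option maxHeartbeats 1000000 in
/-- Deterministic path-wise backbone of Theorem 1 (SHARP convergence). -/
theorem sharp_pathwise_convergence {d : ℕ} (hd : 1 ≤ d)
    (f : EuclideanSpace ℝ (Fin d) → ℝ) (σB CJ : ℝ) (hσB : 0 ≤ σB) (hCJ : 0 ≤ CJ)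
    (hdiff : Differentiable ℝ f)
    (hlip : ∀ x y : EuclideanSpace ℝ (Fin d),
      ‖gradient f x - gradient f y‖ ≤ σB * ‖x - y‖)
    (hbound : ∀ θ : EuclideanSpace ℝ (Fin d), |f θ| ≤ CJ)
    (η₀ : ℝ) (hη₀ : 0 < η₀)
    (η : ℕ → ℝ) (hη0 : η 0 = η₀)
    (hη : ∀ t : ℕ, 1 ≤ t → η t = η₀ / (t : ℝ) ^ ((2 : ℝ) / 3))
    (v : ℕ → EuclideanSpace ℝ (Fin d)) (hv : ∀ t, v t ≠ 0)
    (θ : ℕ → EuclideanSpace ℝ (Fin d))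
    (hθ : ∀ t : ℕ, θ (t + 1) = θ t + (η t) • (‖v t‖⁻¹ • v t))
    (T : ℕ) (hT : 1 ≤ T) (C : ℝ) (hC : 0 ≤ C)
    (hsum : ∑ t ∈ Finset.range T, ‖v t - gradient f (θ t)‖
      ≤ Real.sqrt C * (T : ℝ) ^ ((2 : ℝ) / 3)) :
    (1 / (T : ℝ)) * ∑ t ∈ Finset.range T, ‖gradient f (θ t)‖
      ≤ 8 * Real.sqrt C / (T : ℝ) ^ ((1 : ℝ) / 3)
        + 6 * σB * η₀ / (T : ℝ) ^ ((2 : ℝ) / 3)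
        + 9 * CJ / (η₀ * (T : ℝ) ^ ((1 : ℝ) / 3)) := by
  -- inverse step sizes
  set a : ℕ → ℝ := fun t => (max 1 (t : ℝ)) ^ ((2 : ℝ) / 3) / η₀ with ha_def
  have hapos : ∀ t, 0 ≤ a t := by
    intro t
    have h : (0 : ℝ) ≤ max 1 (t : ℝ) := le_trans zero_le_one (le_max_left _ _)
    simp only [ha_def]
    positivity
  have hamono : Monotone a := by
    intro i j hij
    simp only [ha_def]
    apply (div_le_div_iff_of_pos_right hη₀).2
    exact Real.rpow_le_rpow (le_trans zero_le_one (le_max_left _ _))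
      (max_le_max le_rfl (Nat.cast_le.2 hij)) (by norm_num)
  have hηa : ∀ t, η t * a t = 1 := by
    intro t
    rcases Nat.eq_zero_or_pos t with h0 | h1
    · subst h0
      simp only [ha_def, hη0, Nat.cast_zero]
      rw [max_eq_left (by norm_num : (0:ℝ) ≤ 1), Real.one_rpow]
      field_simp
    · have h1' : (1 : ℝ) ≤ (t : ℝ) := by exact_mod_cast h1
      have ht23 : (0 : ℝ) < (t : ℝ) ^ ((2 : ℝ) / 3) :=
        Real.rpow_pos_of_pos (by linarith) _
      simp only [ha_def, hη t h1, max_eq_right h1']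
      field_simp
  have hηpos : ∀ t, 0 < η t := by
    intro t
    rcases Nat.eq_zero_or_pos t with h0 | h1
    · subst h0; rw [hη0]; exact hη₀
    · have h1' : (0 : ℝ) < (t : ℝ) := by exact_mod_cast h1
      rw [hη t h1]
      positivity
  -- per-step inequality
  have key : ∀ t, ‖gradient f (θ t)‖
      ≤ (f (θ (t + 1)) - f (θ t)) * a t
        + 2 * ‖v t - gradient f (θ t)‖ + σB * η t := by
    intro t
    set g := gradient f (θ t) with hg
    have hu : ‖(‖v t‖⁻¹ • v t)‖ = 1 := norm_smul_inv_norm (hv t)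
    have hstep : θ (t + 1) - θ t = (η t) • (‖v t‖⁻¹ • v t) := by
      rw [hθ t]; abel
    have hnorm : ‖θ (t + 1) - θ t‖ = η t := by
      rw [hstep, norm_smul, hu, mul_one, Real.norm_eq_abs, abs_of_pos (hηpos t)]
    have hquad := sharp_smooth_quad f σB hσB hdiff hlip (θ t) (θ (t + 1))
    rw [hnorm] at hquad
    have hinner : ⟪g, θ (t + 1) - θ t⟫ = η t * ⟪g, ‖v t‖⁻¹ • v t⟫ := by
      rw [hstep, real_inner_smul_right]
    have hdir := sharp_dir g (v t) (hv t)
    have hquad' : f (θ (t + 1)) - f (θ t) ≥ ⟪g, θ (t + 1) - θ t⟫ - σB * η t * η t := by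
      have h := abs_le.1 hquad
      linarith [h.1]
    have hlow : η t * (‖g‖ - 2 * ‖v t - g‖) ≤ ⟪g, θ (t + 1) - θ t⟫ := by
      rw [hinner]
      exact mul_le_mul_of_nonneg_left hdir (hηpos t).le
    have hmain : η t * ‖g‖ ≤ (f (θ (t + 1)) - f (θ t)) + 2 * η t * ‖v t - g‖
        + σB * η t * η t := by nlinarith [hquad', hlow]
    have hone : a t * η t = 1 := by rw [mul_comm]; exact hηa t
    have e1 : a t * (η t * ‖g‖) = ‖g‖ := by linear_combination ‖g‖ * hone
    have e2 : a t * ((f (θ (t + 1)) - f (θ t)) + 2 * η t * ‖v t - g‖ + σB * η t * η t)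
        = (f (θ (t + 1)) - f (θ t)) * a t + 2 * ‖v t - g‖ + σB * η t := by
      linear_combination (2 * ‖v t - g‖ + σB * η t) * hone
    calc ‖g‖ = a t * (η t * ‖g‖) := e1.symm
      _ ≤ a t * ((f (θ (t + 1)) - f (θ t)) + 2 * η t * ‖v t - g‖ + σB * η t * η t) :=
          mul_le_mul_of_nonneg_left hmain (hapos t)
      _ = _ := e2
  -- sum the per-step inequalities
  have hsum1 : ∑ t ∈ Finset.range T, ‖gradient f (θ t)‖
      ≤ (∑ t ∈ Finset.range T, (f (θ (t + 1)) - f (θ t)) * a t)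
        + 2 * (∑ t ∈ Finset.range T, ‖v t - gradient f (θ t)‖)
        + σB * (∑ t ∈ Finset.range T, η t) := by
    calc ∑ t ∈ Finset.range T, ‖gradient f (θ t)‖
        ≤ ∑ t ∈ Finset.range T, ((f (θ (t + 1)) - f (θ t)) * a t
            + 2 * ‖v t - gradient f (θ t)‖ + σB * η t) :=
          Finset.sum_le_sum (fun t _ => key t)
      _ = _ := by
          rw [Finset.sum_add_distrib, Finset.sum_add_distrib, ← Finset.mul_sum, ← Finset.mul_sum]
  -- Abel summation bound
  have habel := sharp_abel (fun t => f (θ t)) a CJ (fun t => hbound _) hapos hamono T hT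
  have haT : a (T - 1) ≤ (T : ℝ) ^ ((2 : ℝ) / 3) / η₀ := by
    simp only [ha_def]
    apply (div_le_div_iff_of_pos_right hη₀).2
    apply Real.rpow_le_rpow (le_trans zero_le_one (le_max_left _ _)) ?_ (by norm_num)
    apply max_le (by exact_mod_cast hT)
    exact_mod_cast Nat.sub_le T 1
  have hT1 : (1 : ℝ) ≤ (T : ℝ) := by exact_mod_cast hT
  have hTpos : (0 : ℝ) < (T : ℝ) := by linarith
  have hT13 : (1 : ℝ) ≤ (T : ℝ) ^ ((1 : ℝ) / 3) := Real.one_le_rpow hT1 (by norm_num)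
  -- step size sum bound
  have hηsum : ∑ t ∈ Finset.range T, η t ≤ 4 * η₀ * (T : ℝ) ^ ((1 : ℝ) / 3) := by
    obtain ⟨m, rfl⟩ : ∃ m, T = m + 1 := ⟨T - 1, (Nat.succ_pred_eq_of_pos hT).symm⟩
    rw [Finset.sum_range_succ', hη0]
    have hterm : ∀ i : ℕ, η (i + 1)
        ≤ 3 * η₀ * (((i + 1 : ℕ) : ℝ) ^ ((1 : ℝ) / 3) - ((i : ℕ) : ℝ) ^ ((1 : ℝ) / 3)) := by
      intro i
      rw [hη (i + 1) (by omega)]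
      have hcast : ((i + 1 : ℕ) : ℝ) = (i : ℝ) + 1 := by push_cast; ring
      rw [hcast]
      have hkey := sharp_step_ineq i
      calc η₀ / ((i : ℝ) + 1) ^ ((2 : ℝ) / 3)
          = η₀ * (1 / ((i : ℝ) + 1) ^ ((2 : ℝ) / 3)) := by ring
        _ ≤ η₀ * (3 * (((i : ℝ) + 1) ^ ((1 : ℝ) / 3) - (i : ℝ) ^ ((1 : ℝ) / 3))) :=
            mul_le_mul_of_nonneg_left hkey hη₀.le
        _ = 3 * η₀ * (((i : ℝ) + 1) ^ ((1 : ℝ) / 3) - (i : ℝ) ^ ((1 : ℝ) / 3)) := by ring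
    have htel : ∑ i ∈ Finset.range m,
        (((i + 1 : ℕ) : ℝ) ^ ((1 : ℝ) / 3) - ((i : ℕ) : ℝ) ^ ((1 : ℝ) / 3))
        = ((m : ℕ) : ℝ) ^ ((1 : ℝ) / 3) - ((0 : ℕ) : ℝ) ^ ((1 : ℝ) / 3) :=
      Finset.sum_range_sub (fun n : ℕ => ((n : ℕ) : ℝ) ^ ((1 : ℝ) / 3)) m
    have hzero : ((0 : ℕ) : ℝ) ^ ((1 : ℝ) / 3) = 0 := by
      rw [Nat.cast_zero]
      exact Real.zero_rpow (by norm_num)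
    have hsum2 : ∑ i ∈ Finset.range m, η (i + 1)
        ≤ 3 * η₀ * ((m : ℝ) ^ ((1 : ℝ) / 3)) := by
      calc ∑ i ∈ Finset.range m, η (i + 1)
          ≤ ∑ i ∈ Finset.range m, (3 * η₀ * (((i + 1 : ℕ) : ℝ) ^ ((1 : ℝ) / 3)
            - ((i : ℕ) : ℝ) ^ ((1 : ℝ) / 3))) := Finset.sum_le_sum (fun i _ => hterm i)
        _ = 3 * η₀ * ∑ i ∈ Finset.range m, (((i + 1 : ℕ) : ℝ) ^ ((1 : ℝ) / 3)
            - ((i : ℕ) : ℝ) ^ ((1 : ℝ) / 3)) := by rw [← Finset.mul_sum]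
        _ = 3 * η₀ * ((m : ℝ) ^ ((1 : ℝ) / 3)) := by rw [htel, hzero]; ring
    have hmT : ((m : ℝ)) ^ ((1 : ℝ) / 3) ≤ ((m + 1 : ℕ) : ℝ) ^ ((1 : ℝ) / 3) :=
      Real.rpow_le_rpow (Nat.cast_nonneg m) (by push_cast; linarith) (by norm_num)
    have h1T : (1 : ℝ) ≤ ((m + 1 : ℕ) : ℝ) ^ ((1 : ℝ) / 3) := hT13
    nlinarith [hsum2, hmT, h1T, hη₀.le]
  -- combine everything
  have h13 : (0 : ℝ) < (T : ℝ) ^ ((1 : ℝ) / 3) := Real.rpow_pos_of_pos hTpos _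
  have h23 : (0 : ℝ) < (T : ℝ) ^ ((2 : ℝ) / 3) := Real.rpow_pos_of_pos hTpos _
  have hmul : (T : ℝ) ^ ((1 : ℝ) / 3) * (T : ℝ) ^ ((2 : ℝ) / 3) = (T : ℝ) := by
    rw [← Real.rpow_add hTpos]
    norm_num
  have hgrand : ∑ t ∈ Finset.range T, ‖gradient f (θ t)‖
      ≤ 8 * Real.sqrt C * (T : ℝ) ^ ((2 : ℝ) / 3)
        + 6 * σB * η₀ * (T : ℝ) ^ ((1 : ℝ) / 3)
        + 9 * CJ * (T : ℝ) ^ ((2 : ℝ) / 3) / η₀ := by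
    have hb1 : (∑ t ∈ Finset.range T, (f (θ (t + 1)) - f (θ t)) * a t)
        ≤ 2 * CJ * ((T : ℝ) ^ ((2 : ℝ) / 3) / η₀) := by
      calc _ ≤ 2 * CJ * a (T - 1) := habel
        _ ≤ 2 * CJ * ((T : ℝ) ^ ((2 : ℝ) / 3) / η₀) :=
            mul_le_mul_of_nonneg_left haT (by linarith)
    have hb2 : 2 * (∑ t ∈ Finset.range T, ‖v t - gradient f (θ t)‖)
        ≤ 2 * (Real.sqrt C * (T : ℝ) ^ ((2 : ℝ) / 3)) := by linarith [hsum]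
    have hb3 : σB * (∑ t ∈ Finset.range T, η t)
        ≤ σB * (4 * η₀ * (T : ℝ) ^ ((1 : ℝ) / 3)) :=
      mul_le_mul_of_nonneg_left hηsum hσB
    have hsq : (0 : ℝ) ≤ Real.sqrt C := Real.sqrt_nonneg C
    have hn1 : (0 : ℝ) ≤ Real.sqrt C * (T : ℝ) ^ ((2 : ℝ) / 3) := by positivity
    have hn2 : (0 : ℝ) ≤ σB * η₀ * (T : ℝ) ^ ((1 : ℝ) / 3) := by positivity
    have hn3 : (0 : ℝ) ≤ CJ * (T : ℝ) ^ ((2 : ℝ) / 3) / η₀ := by positivity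
    have hstep2 : ∑ t ∈ Finset.range T, ‖gradient f (θ t)‖
        ≤ 2 * CJ * ((T : ℝ) ^ ((2 : ℝ) / 3) / η₀) + 2 * (Real.sqrt C * (T : ℝ) ^ ((2 : ℝ) / 3))
          + σB * (4 * η₀ * (T : ℝ) ^ ((1 : ℝ) / 3)) :=
      le_trans hsum1 (add_le_add (add_le_add hb1 hb2) hb3)
    have e9 : 9 * CJ * (T : ℝ) ^ ((2 : ℝ) / 3) / η₀
        = 2 * CJ * ((T : ℝ) ^ ((2 : ℝ) / 3) / η₀) + 7 * (CJ * (T : ℝ) ^ ((2 : ℝ) / 3) / η₀) := by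
      ring
    rw [e9]
    linarith [hstep2, hn1, hn2, hn3]
  have hfin := sharp_alg (8 * Real.sqrt C) (6 * σB * η₀) (9 * CJ)
    ((T : ℝ) ^ ((1 : ℝ) / 3)) ((T : ℝ) ^ ((2 : ℝ) / 3)) (T : ℝ) η₀
    h13.ne' h23.ne' hη₀.ne' hmul
  rw [one_div, inv_mul_le_iff₀ hTpos]
  exact le_of_le_of_eq hgrand hfin.symm
end

section
/- Let d ≥ 1 and let f : ℝ^d → ℝ be differentiable with gradient ∇f Lipschitz with constant σ_B ≥ 0. Let θ ∈ ℝ^d, v ∈ ℝ^d with v ≠ 0, η > 0, and set θ' = θ + η · v/‖v‖. Then ‖∇f(θ)‖ ≤ 8‖v − ∇f(θ)‖ + (3σ_B η)/2 + (3/η)(f(θ') − f(θ)). -/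
/-!
With `ε = v - ∇f θ` and the step `u = η • (‖v‖⁻¹ • v)` of length `η`, the descent lemma for a
`σB`-Lipschitz gradient gives `f θ' - f θ ≥ ⟪∇f θ, u⟫ - σB η² / 2`, and `⟪∇f θ, u⟫ ≥ η (‖v‖ - ‖ε‖)`
because `⟪v, u⟫ = η ‖v‖`. Multiplying by `3 / η` and using `‖∇f θ‖ ≤ ‖v‖ + ‖ε‖` gives the bound.
-/

open InnerProductSpace Set
open scoped Gradient

section Descent

variable {E : Type*} [NormedAddCommGroup E] [InnerProductSpace ℝ E] [CompleteSpace E]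
  {f : E → ℝ} {σ : ℝ}

theorem hasDerivAt_comp_add_smul (hf : Differentiable ℝ f) (x u : E) (t : ℝ) :
    HasDerivAt (fun s : ℝ => f (x + s • u)) ⟪∇ f (x + t • u), u⟫_ℝ t := by
  have hline : HasDerivAt (fun s : ℝ => x + s • u) u t := by
    simpa using ((hasDerivAt_id t).smul_const u).const_add x
  simpa [Function.comp_def] using (hf _).hasGradientAt.hasFDerivAt.comp_hasDerivAt t hline

theorem neg_mul_le_inner_gradient_add_smul_sub
    (hlip : ∀ x y : E, ‖∇ f x - ∇ f y‖ ≤ σ * ‖x - y‖) (x u : E) {t : ℝ} (ht : 0 ≤ t) :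
    -(σ * t * ‖u‖ ^ 2) ≤ ⟪∇ f (x + t • u) - ∇ f x, u⟫_ℝ := by
  have hdist : ‖∇ f (x + t • u) - ∇ f x‖ ≤ σ * t * ‖u‖ := by
    simpa [norm_smul, abs_of_nonneg ht, mul_assoc] using hlip (x + t • u) x
  calc -(σ * t * ‖u‖ ^ 2) ≤ -(‖∇ f (x + t • u) - ∇ f x‖ * ‖u‖) := by
        rw [sq, ← mul_assoc]; gcongr
    _ ≤ ⟪∇ f (x + t • u) - ∇ f x, u⟫_ℝ := neg_le_of_abs_le (abs_real_inner_le_norm _ _)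

theorem inner_gradient_sub_le_sub (hf : Differentiable ℝ f)
    (hlip : ∀ x y : E, ‖∇ f x - ∇ f y‖ ≤ σ * ‖x - y‖) (x u : E) :
    ⟪∇ f x, u⟫_ℝ - σ / 2 * ‖u‖ ^ 2 ≤ f (x + u) - f x := by
  set c := ⟪∇ f x, u⟫_ℝ
  -- `h 1 - h 0` is the claimed gap, and the Lipschitz bound makes `h' ≥ 0` on `[0, 1]`.
  set h : ℝ → ℝ := fun t => f (x + t • u) - t * c + σ * ‖u‖ ^ 2 / 2 * t ^ 2
  have hderiv : ∀ t, HasDerivAt h (⟪∇ f (x + t • u), u⟫_ℝ - c + σ * ‖u‖ ^ 2 * t) t := by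
    intro t
    refine (((hasDerivAt_comp_add_smul hf x u t).sub ((hasDerivAt_id t).mul_const c)).add
      ((hasDerivAt_pow 2 t).const_mul (σ * ‖u‖ ^ 2 / 2))).congr_deriv ?_
    simp only [one_mul]; push_cast; ring
  have hmono : MonotoneOn h (Icc 0 1) := by
    refine monotoneOn_of_hasDerivWithinAt_nonneg (convex_Icc 0 1)
      (fun t _ => (hderiv t).continuousAt.continuousWithinAt)
      (fun t _ => (hderiv t).hasDerivWithinAt) fun t ht => ?_
    rw [interior_Icc] at ht
    have := neg_mul_le_inner_gradient_add_smul_sub hlip x u ht.1.le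
    rw [inner_sub_left] at this
    linarith
  have h01 := hmono (left_mem_Icc.2 zero_le_one) (right_mem_Icc.2 zero_le_one) zero_le_one
  norm_num [h] at h01
  linarith

end Descent

theorem mul_sub_norm_sub_le_inner_smul_normalize {E : Type*} [NormedAddCommGroup E]
    [InnerProductSpace ℝ E] (g v : E) {η : ℝ} (hη : 0 ≤ η) :
    η * (‖v‖ - ‖v - g‖) ≤ ⟪g, η • (‖v‖⁻¹ • v)⟫_ℝ := by
  have hv : ⟪v, ‖v‖⁻¹ • v⟫_ℝ = ‖v‖ := by
    rw [real_inner_smul_right, real_inner_self_eq_norm_sq]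
    rcases eq_or_ne ‖v‖ 0 with h | h
    · simp [h]
    · field_simp
  have hunit : ‖‖v‖⁻¹ • v‖ ≤ 1 := by
    rcases eq_or_ne v 0 with rfl | h
    · simp
    · exact (norm_smul_inv_norm h).le
  have herr : ⟪v - g, ‖v‖⁻¹ • v⟫_ℝ ≤ ‖v - g‖ :=
    (real_inner_le_norm _ _).trans (mul_le_of_le_one_right (norm_nonneg _) hunit)
  rw [real_inner_smul_right, ← sub_sub_cancel v g, inner_sub_left, sub_sub_cancel, hv]
  gcongr

theorem sharp_supplemental_lemma_general {d : ℕ}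
    (f : EuclideanSpace ℝ (Fin d) → ℝ) (σB : ℝ)
    (hdiff : Differentiable ℝ f)
    (hlip : ∀ x y : EuclideanSpace ℝ (Fin d),
      ‖gradient f x - gradient f y‖ ≤ σB * ‖x - y‖)
    (θ v : EuclideanSpace ℝ (Fin d)) (hv : v ≠ 0) (η : ℝ) (hη : 0 < η)
    (θ' : EuclideanSpace ℝ (Fin d)) (hθ' : θ' = θ + η • (‖v‖⁻¹ • v)) :
    ‖gradient f θ‖ ≤ 8 * ‖v - gradient f θ‖ + 3 * σB * η / 2
      + (3 / η) * (f θ' - f θ) := by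
  set g := ∇ f θ
  have hstep : ‖η • (‖v‖⁻¹ • v)‖ = η := by
    rw [norm_smul, Real.norm_of_nonneg hη.le,
      show ‖‖v‖⁻¹ • v‖ = 1 from norm_smul_inv_norm hv, mul_one]
  have hascent : η * (‖v‖ - ‖v - g‖) - σB / 2 * η ^ 2 ≤ f θ' - f θ := by
    have := inner_gradient_sub_le_sub hdiff hlip θ (η • (‖v‖⁻¹ • v))
    rw [← hθ', hstep] at this
    linarith [mul_sub_norm_sub_le_inner_smul_normalize g v hη.le]
  have hscaled : 3 * (‖v‖ - ‖v - g‖) - 3 * σB * η / 2 ≤ (3 / η) * (f θ' - f θ) :=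
    calc 3 * (‖v‖ - ‖v - g‖) - 3 * σB * η / 2
        = (3 / η) * (η * (‖v‖ - ‖v - g‖) - σB / 2 * η ^ 2) := by field_simp
      _ ≤ (3 / η) * (f θ' - f θ) := by gcongr
  have hg : ‖g‖ ≤ ‖v‖ + ‖v - g‖ := by simpa using norm_sub_le v (v - g)
  linarith [norm_nonneg v, norm_nonneg (v - g)]

/-- Supplemental Lemma of the paper, at one normalized ascent step. -/
theorem sharp_supplemental_lemma {d : ℕ} (hd : 1 ≤ d)
    (f : EuclideanSpace ℝ (Fin d) → ℝ) (σB : ℝ) (hσB : 0 ≤ σB)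
    (hdiff : Differentiable ℝ f)
    (hlip : ∀ x y : EuclideanSpace ℝ (Fin d),
      ‖gradient f x - gradient f y‖ ≤ σB * ‖x - y‖)
    (θ v : EuclideanSpace ℝ (Fin d)) (hv : v ≠ 0) (η : ℝ) (hη : 0 < η)
    (θ' : EuclideanSpace ℝ (Fin d)) (hθ' : θ' = θ + η • (‖v‖⁻¹ • v)) :
    ‖gradient f θ‖ ≤ 8 * ‖v - gradient f θ‖ + 3 * σB * η / 2
      + (3 / η) * (f θ' - f θ) :=
  sharp_supplemental_lemma_general f σB hdiff hlip θ v hv η hη θ' hθ'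
end

section
/- Let E be a real inner product space and let g, ε ∈ E with g + ε ≠ 0. Then ⟨g, (g + ε)/‖g + ε‖⟩ ≥ ‖g‖/3 − (8/3)‖ε‖. -/
open scoped RealInnerProductSpace

/-- Key vector inequality in the proof of the Supplemental Lemma. -/
theorem inner_normalized_ge {E : Type*} [NormedAddCommGroup E]
    [InnerProductSpace ℝ E] (g ε : E) (h : g + ε ≠ 0) :
    ⟪g, ‖g + ε‖⁻¹ • (g + ε)⟫ ≥ ‖g‖ / 3 - (8 / 3) * ‖ε‖ := by
  set u := g + ε with hu
  have hn : (0:ℝ) < ‖u‖ := norm_pos_iff.mpr h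
  have h1 : ⟪g, u⟫ = ‖u‖^2 - ⟪ε, u⟫ := by
    rw [← real_inner_self_eq_norm_sq]
    have : g = u - ε := by rw [hu]; abel
    rw [this, inner_sub_left]
  have h2 : ⟪ε, u⟫ ≤ ‖ε‖ * ‖u‖ := real_inner_le_norm ε u
  have h3 : ‖g‖ ≤ ‖u‖ + ‖ε‖ := by
    calc ‖g‖ = ‖u - ε‖ := by rw [hu]; simp
      _ ≤ ‖u‖ + ‖ε‖ := norm_sub_le u ε
  have hε : 0 ≤ ‖ε‖ := norm_nonneg ε
  rw [ge_iff_le, real_inner_smul_right, h1, inv_mul_eq_div, le_div_iff₀ hn]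
  nlinarith [sq_nonneg ‖u‖, mul_pos hn hn]
end

section
/- Let α₀ ∈ (2/3, 1], η₀ > 0, and σ_B, σ_g ≥ 0. Define α : ℕ → ℝ by α_t = α₀/t^{2/3} for t ≥ 1, and η : ℕ → ℝ by η_0 = η₀ and η_t = η₀/t^{2/3} for t ≥ 1. Let e : ℕ → ℝ satisfy e_t ≥ 0 for all t, e_0 ≤ σ_g², and for all t ≥ 1: e_{t−1} ≤ (1/α_t)(e_{t−1} − e_t) + 8σ_B² η_{t−1}²/α_t + 2α_t σ_g². Then for every integer T ≥ 1: Σ_{t=0}^{T−1} e_t ≤ C · T^{1/3}, where C = 3α₀ (48σ_B²η₀²/α₀ + (6α₀ + 1/α₀)σ_g²)/(3α₀ − 2). -/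
/-!
With `c t = 1 / α (t + 1)` the recursion reads `e t ≤ c t * (e t - e (t + 1)) + b t`. Summing it
telescopes (Abel summation) to `c 0 * e 0 + ∑ (c (t + 1) - c t) * e (t + 1) + ∑ b t`. Concavity of
`x ^ (2/3)` gives `c (t + 1) - c t ≤ 2 / (3 α₀)`, so the middle sum is at most `2 / (3 α₀)` times
the accumulated error itself and can be absorbed on the left because `α₀ > 2/3`. The remaining
sums are controlled by `∑_{t<T} (t + 1) ^ (-2/3) ≤ 3 T ^ (1/3)`, which follows from Bernoulli's
inequality `(1 + s) ^ p ≤ 1 + p s`.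
-/

open Finset Real

section Descent

variable {e b c : ℕ → ℝ} {δ : ℝ} (he : ∀ t, 0 ≤ e t) (hc : ∀ t, c (t + 1) - c t ≤ δ)
  (hrec : ∀ t, e t ≤ c t * (e t - e (t + 1)) + b t)
include he hc hrec

lemma sum_add_mul_le_of_descent (T : ℕ) :
    ∑ t ∈ range (T + 1), e t + c T * e (T + 1)
      ≤ c 0 * e 0 + δ * ∑ t ∈ range T, e (t + 1) + ∑ t ∈ range (T + 1), b t := by
  induction T with
  | zero =>
    simp only [zero_add, sum_range_one, sum_range_zero, mul_zero, add_zero]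
    linarith [hrec 0]
  | succ T ih =>
    have hweight : (c (T + 1) - c T) * e (T + 1) ≤ δ * e (T + 1) :=
      mul_le_mul_of_nonneg_right (hc T) (he _)
    rw [sum_range_succ e (T + 1), sum_range_succ (fun t => e (t + 1)) T, sum_range_succ b (T + 1),
      mul_add]
    linarith [hrec (T + 1)]

lemma sum_le_of_descent (hc0 : ∀ t, 0 ≤ c t) (hδ : 0 ≤ δ) (T : ℕ) :
    ∑ t ∈ range T, e t ≤ c 0 * e 0 + δ * ∑ t ∈ range T, e t + ∑ t ∈ range T, b t := by
  rcases T with _ | T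
  · simpa using mul_nonneg (hc0 0) (he 0)
  have hshift : ∑ t ∈ range T, e (t + 1) ≤ ∑ t ∈ range (T + 1), e t := by
    rw [sum_range_succ' e T]
    linarith [he 0]
  linarith [sum_add_mul_le_of_descent he hc hrec T, mul_nonneg (hc0 T) (he (T + 1)),
    mul_le_mul_of_nonneg_left hshift hδ]

end Descent

lemma le_div_one_sub_of_le_add_mul {S A δ : ℝ} (hδ : δ < 1) (h : S ≤ A + δ * S) :
    S ≤ A / (1 - δ) := by
  rw [le_div_iff₀ (by linarith)]
  linarith

lemma rpow_add_one_sub_rpow_le {p x : ℝ} (hp0 : 0 ≤ p) (hp1 : p ≤ 1) (hx : 0 < x) :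
    (x + 1) ^ p - x ^ p ≤ p * x ^ (p - 1) := by
  have hB := rpow_one_add_le_one_add_mul_self (s := 1 / x) (by linarith [one_div_pos.2 hx]) hp0 hp1
  have hsplit : (x + 1) ^ p = x ^ p * (1 + 1 / x) ^ p := by
    rw [← mul_rpow hx.le (by positivity)]
    congr 1
    field_simp
  rw [hsplit, rpow_sub_one hx.ne']
  have hB' := mul_le_mul_of_nonneg_left hB (rpow_nonneg hx.le p)
  calc x ^ p * (1 + 1 / x) ^ p - x ^ p ≤ x ^ p * (1 + p * (1 / x)) - x ^ p := by linarith
    _ = p * (x ^ p / x) := by ring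

lemma mul_rpow_sub_one_le_rpow_add_one_sub {p x : ℝ} (hp0 : 0 ≤ p) (hp1 : p ≤ 1) (hx : 0 ≤ x) :
    p * (x + 1) ^ (p - 1) ≤ (x + 1) ^ p - x ^ p := by
  have hx1 : 0 < x + 1 := by linarith
  have hB := rpow_one_add_le_one_add_mul_self (s := -(1 / (x + 1)))
    (by rw [neg_le_neg_iff, div_le_one hx1]; linarith) hp0 hp1
  have hsplit : x ^ p = (x + 1) ^ p * (1 + -(1 / (x + 1))) ^ p := by
    rw [← mul_rpow hx1.le (by rw [← sub_eq_add_neg, sub_nonneg, div_le_one hx1]; linarith)]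
    congr 1
    field_simp
    ring
  rw [hsplit, rpow_sub_one hx1.ne']
  have hB' := mul_le_mul_of_nonneg_left hB (rpow_nonneg hx1.le p)
  calc p * ((x + 1) ^ p / (x + 1)) = (x + 1) ^ p - (x + 1) ^ p * (1 + p * -(1 / (x + 1))) := by
        ring
    _ ≤ _ := by linarith

lemma rpow_add_one_sub_rpow_le_of_one_le {p x : ℝ} (hp0 : 0 ≤ p) (hp1 : p ≤ 1) (hx : 1 ≤ x) :
    (x + 1) ^ p - x ^ p ≤ p :=
  (rpow_add_one_sub_rpow_le hp0 hp1 (by linarith)).trans <|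
    mul_le_of_le_one_right hp0 (rpow_le_one_of_one_le_of_nonpos hx (by linarith))

lemma sum_one_div_rpow_le {p : ℝ} (hp0 : 0 < p) (hp1 : p ≤ 1) (T : ℕ) :
    ∑ t ∈ range T, 1 / ((t : ℝ) + 1) ^ (1 - p) ≤ (T : ℝ) ^ p / p := by
  have hterm (t : ℕ) : 1 / ((t : ℝ) + 1) ^ (1 - p)
      ≤ (((t + 1 : ℕ) : ℝ) ^ p - ((t : ℕ) : ℝ) ^ p) / p := by
    rw [le_div_iff₀ hp0, one_div, ← rpow_neg (by positivity), neg_sub, mul_comm]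
    push_cast
    exact mul_rpow_sub_one_le_rpow_add_one_sub hp0.le hp1 (Nat.cast_nonneg t)
  calc _ ≤ ∑ t ∈ range T, (((t + 1 : ℕ) : ℝ) ^ p - ((t : ℕ) : ℝ) ^ p) / p :=
        sum_le_sum fun t _ => hterm t
    _ = (T : ℝ) ^ p / p := by
      rw [← sum_div, sum_range_sub (fun t : ℕ => ((t : ℝ)) ^ p)]
      simp [zero_rpow hp0.ne']

lemma sum_one_div_rpow_two_thirds_le (T : ℕ) :
    ∑ t ∈ range T, 1 / ((t : ℝ) + 1) ^ ((2 : ℝ) / 3) ≤ 3 * (T : ℝ) ^ ((1 : ℝ) / 3) := by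
  have h := sum_one_div_rpow_le (p := 1 / 3) (by norm_num) (by norm_num) T
  norm_num at h ⊢
  linarith

lemma two_rpow_two_thirds_le : (2 : ℝ) ^ ((2 : ℝ) / 3) ≤ 5 / 3 := by
  have hcube : ((2 : ℝ) ^ ((2 : ℝ) / 3)) ^ 3 = 4 := by
    rw [← rpow_natCast, ← rpow_mul (by norm_num)]
    norm_num
  exact le_of_pow_le_pow_left₀ three_ne_zero (by norm_num) (by rw [hcube]; norm_num)

lemma rpow_two_thirds_div_sq_le {x : ℝ} (hx : 1 ≤ x) :
    (x + 1) ^ ((2 : ℝ) / 3) / (x ^ ((2 : ℝ) / 3)) ^ 2 ≤ 5 / 3 / x ^ ((2 : ℝ) / 3) := by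
  have hq : 0 < x ^ ((2 : ℝ) / 3) := rpow_pos_of_pos (by linarith) _
  have hnum : (x + 1) ^ ((2 : ℝ) / 3) ≤ 5 / 3 * x ^ ((2 : ℝ) / 3) :=
    calc (x + 1) ^ ((2 : ℝ) / 3) ≤ (2 * x) ^ ((2 : ℝ) / 3) :=
          rpow_le_rpow (by linarith) (by linarith) (by norm_num)
      _ = 2 ^ ((2 : ℝ) / 3) * x ^ ((2 : ℝ) / 3) := mul_rpow (by norm_num) (by linarith)
      _ ≤ 5 / 3 * x ^ ((2 : ℝ) / 3) := by gcongr; exact two_rpow_two_thirds_le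
  rw [div_le_div_iff₀ (by positivity) hq]
  nlinarith

section Schedule

variable {α₀ : ℝ} {α : ℕ → ℝ} (hα : ∀ t : ℕ, α (t + 1) = α₀ / ((t : ℝ) + 1) ^ ((2 : ℝ) / 3))
include hα

lemma sum_schedule_le (hα₀ : 0 ≤ α₀) (T : ℕ) :
    ∑ t ∈ range T, α (t + 1) ≤ 3 * α₀ * (T : ℝ) ^ ((1 : ℝ) / 3) := by
  simp_rw [hα, div_eq_mul_one_div α₀, ← mul_sum]
  exact (mul_le_mul_of_nonneg_left (sum_one_div_rpow_two_thirds_le T) hα₀).trans_eq (by ring)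

lemma one_div_schedule_succ_sub_le (hα₀ : 0 < α₀) (t : ℕ) :
    1 / α (t + 2) - 1 / α (t + 1) ≤ 2 / (3 * α₀) := by
  have h := rpow_add_one_sub_rpow_le_of_one_le (p := 2 / 3) (by norm_num) (by norm_num)
    (le_add_of_nonneg_left t.cast_nonneg : (1 : ℝ) ≤ t + 1)
  rw [hα, hα, one_div_div, one_div_div, ← sub_div, div_le_div_iff₀ hα₀ (by positivity)]
  push_cast
  nlinarith

lemma sum_sq_div_schedule_le {η₀ : ℝ} {η : ℕ → ℝ} (hα₀ : 0 < α₀) (hη0 : η 0 = η₀)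
    (hη : ∀ t : ℕ, η (t + 1) = η₀ / ((t : ℝ) + 1) ^ ((2 : ℝ) / 3)) (T : ℕ) :
    ∑ t ∈ range T, η t ^ 2 / α (t + 1) ≤ 6 * (η₀ ^ 2 / α₀) * (T : ℝ) ^ ((1 : ℝ) / 3) := by
  rcases T with _ | n
  · simp
  set K := η₀ ^ 2 / α₀
  have hterm (t : ℕ) :
      η (t + 1) ^ 2 / α (t + 2) ≤ 5 / 3 * K * (1 / ((t : ℝ) + 1) ^ ((2 : ℝ) / 3)) := by
    have h := rpow_two_thirds_div_sq_le (le_add_of_nonneg_left t.cast_nonneg : (1 : ℝ) ≤ t + 1)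
    rw [hη, hα]
    push_cast
    calc _ = K * (((t : ℝ) + 1 + 1) ^ ((2 : ℝ) / 3) / (((t : ℝ) + 1) ^ ((2 : ℝ) / 3)) ^ 2) := by
          simp only [K]; field_simp
      _ ≤ K * (5 / 3 / ((t : ℝ) + 1) ^ ((2 : ℝ) / 3)) := by gcongr
      _ = _ := by ring
  have hmono : (n : ℝ) ^ ((1 : ℝ) / 3) ≤ ((n + 1 : ℕ) : ℝ) ^ ((1 : ℝ) / 3) :=
    rpow_le_rpow n.cast_nonneg (by push_cast; linarith) (by norm_num)
  have hone : 1 ≤ ((n + 1 : ℕ) : ℝ) ^ ((1 : ℝ) / 3) :=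
    one_le_rpow (by exact_mod_cast Nat.le_add_left 1 n) (by norm_num)
  rw [sum_range_succ', hη0, hα 0]
  calc _ ≤ ∑ t ∈ range n, 5 / 3 * K * (1 / ((t : ℝ) + 1) ^ ((2 : ℝ) / 3)) + K := by
        gcongr with t
        · exact hterm t
        · simp [K]
    _ ≤ 6 * K * ((n + 1 : ℕ) : ℝ) ^ ((1 : ℝ) / 3) := by
        have hK : 0 ≤ K := by positivity
        rw [← mul_sum]
        linarith [mul_le_mul_of_nonneg_left (sum_one_div_rpow_two_thirds_le n) hK,
          mul_le_mul_of_nonneg_left hmono hK, mul_le_mul_of_nonneg_left hone hK]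

end Schedule

theorem sharp_sum_variance_bound_general
    (α₀ : ℝ) (hα₀ : α₀ ∈ Set.Ioc (2 / 3 : ℝ) 1)
    (η₀ : ℝ) (σB σg : ℝ)
    (α : ℕ → ℝ) (hα : ∀ t : ℕ, 1 ≤ t → α t = α₀ / (t : ℝ) ^ ((2 : ℝ) / 3))
    (η : ℕ → ℝ) (hη0 : η 0 = η₀)
    (hη : ∀ t : ℕ, 1 ≤ t → η t = η₀ / (t : ℝ) ^ ((2 : ℝ) / 3))
    (e : ℕ → ℝ) (he : ∀ t, 0 ≤ e t) (he0 : e 0 ≤ σg ^ 2)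
    (hrec : ∀ t : ℕ, 1 ≤ t →
      e (t - 1) ≤ (1 / α t) * (e (t - 1) - e t)
        + 8 * σB ^ 2 * (η (t - 1)) ^ 2 / α t + 2 * α t * σg ^ 2) :
    ∀ T : ℕ, 1 ≤ T →
      ∑ t ∈ Finset.range T, e t
        ≤ 3 * α₀ * (48 * σB ^ 2 * η₀ ^ 2 / α₀ + (6 * α₀ + 1 / α₀) * σg ^ 2)
            / (3 * α₀ - 2) * (T : ℝ) ^ ((1 : ℝ) / 3) := by
  intro T hT
  obtain ⟨hα₀_gt, -⟩ := hα₀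
  have hα₀_pos : 0 < α₀ := by linarith
  have hα' (t : ℕ) : α (t + 1) = α₀ / ((t : ℝ) + 1) ^ ((2 : ℝ) / 3) := by
    rw [hα (t + 1) (Nat.le_add_left 1 t)]; push_cast; rfl
  have hη' (t : ℕ) : η (t + 1) = η₀ / ((t : ℝ) + 1) ^ ((2 : ℝ) / 3) := by
    rw [hη (t + 1) (Nat.le_add_left 1 t)]; push_cast; rfl
  have hS := sum_le_of_descent (c := fun t => 1 / α (t + 1))
    (b := fun t => 8 * σB ^ 2 * η t ^ 2 / α (t + 1) + 2 * α (t + 1) * σg ^ 2) he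
    (one_div_schedule_succ_sub_le hα' hα₀_pos)
    (fun t => by simpa [add_assoc] using hrec (t + 1) (Nat.le_add_left 1 t))
    (fun t => by simp only [hα']; positivity) (by positivity) T
  have hη_sum := sum_sq_div_schedule_le hα' hα₀_pos hη0 hη' T
  have hα_sum := sum_schedule_le hα' hα₀_pos.le T
  set X := (T : ℝ) ^ ((1 : ℝ) / 3)
  have hX : 1 ≤ X := one_le_rpow (by exact_mod_cast hT) (by norm_num)
  have hinit : 1 / α (0 + 1) * e 0 ≤ σg ^ 2 / α₀ * X := by
    rw [hα' 0, Nat.cast_zero, zero_add, one_rpow, div_one, one_div_mul_eq_div]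
    exact (div_le_div_of_nonneg_right he0 hα₀_pos.le).trans
      (le_mul_of_one_le_right (by positivity) hX)
  have hnoise : ∑ t ∈ range T, (8 * σB ^ 2 * η t ^ 2 / α (t + 1) + 2 * α (t + 1) * σg ^ 2)
      ≤ (48 * σB ^ 2 * η₀ ^ 2 / α₀ + 6 * α₀ * σg ^ 2) * X := by
    simp_rw [sum_add_distrib, mul_div_assoc, ← mul_sum, ← sum_mul, ← mul_sum]
    nlinarith [mul_le_mul_of_nonneg_left hη_sum (by positivity : (0 : ℝ) ≤ 8 * σB ^ 2),
      mul_le_mul_of_nonneg_right hα_sum (by positivity : (0 : ℝ) ≤ σg ^ 2)]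
  have h3α₀ : 3 * α₀ - 2 ≠ 0 := by linarith
  calc ∑ t ∈ range T, e t
      ≤ (48 * σB ^ 2 * η₀ ^ 2 / α₀ + (6 * α₀ + 1 / α₀) * σg ^ 2) * X / (1 - 2 / (3 * α₀)) :=
        le_div_one_sub_of_le_add_mul (by rw [div_lt_one (by positivity)]; linarith)
          (by linarith [show (48 * σB ^ 2 * η₀ ^ 2 / α₀ + (6 * α₀ + 1 / α₀) * σg ^ 2) * X
            = σg ^ 2 / α₀ * X + (48 * σB ^ 2 * η₀ ^ 2 / α₀ + 6 * α₀ * σg ^ 2) * X by ring])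
    _ = _ := by field_simp

/-- Deterministic sequence lemma underlying Theorem 1: summing and telescoping
the one-step recursion bounds the accumulated variance. -/
theorem sharp_sum_variance_bound
    (α₀ : ℝ) (hα₀ : α₀ ∈ Set.Ioc (2 / 3 : ℝ) 1)
    (η₀ : ℝ) (hη₀ : 0 < η₀) (σB σg : ℝ) (hσB : 0 ≤ σB) (hσg : 0 ≤ σg)
    (α : ℕ → ℝ) (hα : ∀ t : ℕ, 1 ≤ t → α t = α₀ / (t : ℝ) ^ ((2 : ℝ) / 3))
    (η : ℕ → ℝ) (hη0 : η 0 = η₀)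
    (hη : ∀ t : ℕ, 1 ≤ t → η t = η₀ / (t : ℝ) ^ ((2 : ℝ) / 3))
    (e : ℕ → ℝ) (he : ∀ t, 0 ≤ e t) (he0 : e 0 ≤ σg ^ 2)
    (hrec : ∀ t : ℕ, 1 ≤ t →
      e (t - 1) ≤ (1 / α t) * (e (t - 1) - e t)
        + 8 * σB ^ 2 * (η (t - 1)) ^ 2 / α t + 2 * α t * σg ^ 2) :
    ∀ T : ℕ, 1 ≤ T →
      ∑ t ∈ Finset.range T, e t
        ≤ 3 * α₀ * (48 * σB ^ 2 * η₀ ^ 2 / α₀ + (6 * α₀ + 1 / α₀) * σg ^ 2)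
            / (3 * α₀ - 2) * (T : ℝ) ^ ((1 : ℝ) / 3) :=
  sharp_sum_variance_bound_general α₀ hα₀ η₀ σB σg α hα η hη0 hη e he he0 hrec
end

section
/- Let η₀ > 0, σ_B ≥ 0, C ≥ 0, C_J ≥ 0, and let T ≥ 1 be an integer. Define η : ℕ → ℝ by η_0 = η₀ and η_t = η₀/t^{2/3} for t ≥ 1. Let x, e : ℕ → ℝ be nonnegative sequences and j : ℕ → ℝ with |j_t| ≤ C_J for all 0 ≤ t ≤ T. Suppose that for every 0 ≤ t ≤ T−1: x_t ≤ 8 e_t + (3σ_B/2) η_t + (3/η_t)(j_{t+1} − j_t), and that Σ_{t=0}^{T−1} e_t ≤ √C · T^{2/3}. Then (1/T) Σ_{t=0}^{T−1} x_t ≤ 8√C/T^{1/3} + 6σ_B η₀/T^{2/3} + 9C_J/(η₀ T^{1/3}). -/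
open Finset

/-! Summing the per-step inequality splits the bound into three sums. The error sum is given.
The step sizes sum to at most `4 η₀ T^{1/3}` because `(1/3) (t+1)^{-2/3} ≤ (t+1)^{1/3} - t^{1/3}`
(weighted AM-GM), which telescopes. The sum of `(j_{t+1} - j_t)/η_t` is, by Abel summation and
monotonicity of `η`, at most `2 C_J / η_{T-1} ≤ 2 C_J T^{2/3} / η₀`. Dividing by
`T = T^{1/3} T^{2/3}` gives the claim. -/

-- `max t 1` makes `η 0 = η₀`; the bare formula would give the junk value `η₀ / 0 ^ (2/3) = 0`.
noncomputable def stepSchedule (η₀ : ℝ) (t : ℕ) : ℝ :=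
  η₀ / max (t : ℝ) 1 ^ ((2 : ℝ) / 3)

theorem div_rpow_one_sub_le_rpow_sub_rpow {p b : ℝ} (hp0 : 0 ≤ p) (hp1 : p ≤ 1) (hb : 0 ≤ b) :
    p / (b + 1) ^ (1 - p) ≤ (b + 1) ^ p - b ^ p := by
  have hb1 : 0 < b + 1 := by linarith
  have amgm : b ^ p * (b + 1) ^ (1 - p) ≤ p * b + (1 - p) * (b + 1) :=
    Real.geom_mean_le_arith_mean2_weighted hp0 (sub_nonneg.2 hp1) hb hb1.le (by ring)
  have split : (b + 1) ^ p * (b + 1) ^ (1 - p) = b + 1 := by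
    rw [← Real.rpow_add hb1]; simp
  rw [div_le_iff₀ (by positivity), sub_mul, split]
  linarith

theorem sum_range_div_rpow_one_sub_le {p : ℝ} (hp0 : 0 ≤ p) (hp1 : p ≤ 1) (n : ℕ) :
    ∑ t ∈ range n, p / ((t : ℝ) + 1) ^ (1 - p) ≤ (n : ℝ) ^ p :=
  calc ∑ t ∈ range n, p / ((t : ℝ) + 1) ^ (1 - p)
      ≤ ∑ t ∈ range n, (((t + 1 : ℕ) : ℝ) ^ p - (t : ℝ) ^ p) :=
        sum_le_sum fun t _ => by
          push_cast; exact div_rpow_one_sub_le_rpow_sub_rpow hp0 hp1 t.cast_nonneg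
    _ = (n : ℝ) ^ p - (0 : ℝ) ^ p := by
        rw [sum_range_sub (fun t : ℕ => (t : ℝ) ^ p)]; simp
    _ ≤ (n : ℝ) ^ p := sub_le_self _ (Real.rpow_nonneg le_rfl p)

theorem sum_range_sub_div_le_of_antitone {η j : ℕ → ℝ} {c : ℝ} (hpos : ∀ t, 0 < η t)
    (hanti : Antitone η) (n : ℕ) (hj : ∀ t ≤ n + 1, |j t| ≤ c) :
    ∑ t ∈ range (n + 1), (j (t + 1) - j t) / η t ≤ (c + j (n + 1)) / η n := by
  induction n with
  | zero =>
    rw [sum_range_one]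
    gcongr
    · exact (hpos 0).le
    · linarith [neg_abs_le (j 0), hj 0 (by omega)]
  | succ n ih =>
    have hjn : 0 ≤ c + j (n + 1) := by linarith [neg_abs_le (j (n + 1)), hj (n + 1) (by omega)]
    rw [sum_range_succ]
    calc _ ≤ (c + j (n + 1)) / η n + (j (n + 2) - j (n + 1)) / η (n + 1) := by
          gcongr; exact ih fun t ht => hj t (by omega)
      _ ≤ (c + j (n + 1)) / η (n + 1) + (j (n + 2) - j (n + 1)) / η (n + 1) := by
          gcongr
          · exact hpos _
          · exact hanti n.le_succ
      _ = (c + j (n + 2)) / η (n + 1) := by ring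

theorem sum_range_sub_div_le_two_mul_div {η j : ℕ → ℝ} {c : ℝ} (hpos : ∀ t, 0 < η t)
    (hanti : Antitone η) (n : ℕ) (hj : ∀ t ≤ n + 1, |j t| ≤ c) :
    ∑ t ∈ range (n + 1), (j (t + 1) - j t) / η t ≤ 2 * c / η n := by
  refine (sum_range_sub_div_le_of_antitone hpos hanti n hj).trans ?_
  gcongr
  · exact (hpos n).le
  · linarith [le_abs_self (j (n + 1)), hj (n + 1) le_rfl]

section stepSchedule

variable {η₀ : ℝ}

theorem eq_stepSchedule {η : ℕ → ℝ} (hη0 : η 0 = η₀)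
    (hη : ∀ t : ℕ, 1 ≤ t → η t = η₀ / (t : ℝ) ^ ((2 : ℝ) / 3)) : η = stepSchedule η₀ := by
  funext t
  rcases Nat.eq_zero_or_pos t with rfl | ht
  · simp [stepSchedule, hη0]
  · rw [hη t ht, stepSchedule, max_eq_left (by exact_mod_cast ht)]

theorem stepSchedule_pos (hη₀ : 0 < η₀) (t : ℕ) : 0 < stepSchedule η₀ t := by
  unfold stepSchedule; positivity

theorem stepSchedule_antitone (hη₀ : 0 ≤ η₀) : Antitone (stepSchedule η₀) := by
  intro s t hst
  unfold stepSchedule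
  gcongr

theorem inv_stepSchedule_le (hη₀ : 0 < η₀) (t : ℕ) :
    (stepSchedule η₀ t)⁻¹ ≤ ((t : ℝ) + 1) ^ ((2 : ℝ) / 3) / η₀ := by
  rw [stepSchedule, inv_div]
  gcongr
  exact max_le (by linarith) (by linarith [t.cast_nonneg (α := ℝ)])

theorem sum_range_stepSchedule_le (hη₀ : 0 ≤ η₀) (n : ℕ) :
    ∑ t ∈ range (n + 1), stepSchedule η₀ t ≤ 4 * η₀ * ((n : ℝ) + 1) ^ ((1 : ℝ) / 3) := by
  have tail : ∑ t ∈ range n, stepSchedule η₀ (t + 1)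
      = 3 * η₀ * ∑ t ∈ range n, (1 / 3 : ℝ) / ((t : ℝ) + 1) ^ (1 - 1 / 3 : ℝ) := by
    rw [mul_sum]
    refine sum_congr rfl fun t _ => ?_
    rw [stepSchedule, Nat.cast_succ, max_eq_left (by linarith [t.cast_nonneg (α := ℝ)])]
    norm_num
    ring
  have hsum := sum_range_div_rpow_one_sub_le (p := 1 / 3) (by norm_num) (by norm_num) n
  have hn : (n : ℝ) ^ ((1 : ℝ) / 3) ≤ ((n : ℝ) + 1) ^ ((1 : ℝ) / 3) := by gcongr; linarith
  have one_le : 1 ≤ ((n : ℝ) + 1) ^ ((1 : ℝ) / 3) := Real.one_le_rpow (by linarith) (by norm_num)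
  rw [sum_range_succ', tail, show stepSchedule η₀ 0 = η₀ by simp [stepSchedule]]
  nlinarith

end stepSchedule

theorem sharp_final_average_general
    (η₀ : ℝ) (hη₀ : 0 < η₀) (σB C CJ : ℝ) (hσB : 0 ≤ σB)
    (hCJ : 0 ≤ CJ) (T : ℕ) (hT : 1 ≤ T)
    (η : ℕ → ℝ) (hη0 : η 0 = η₀)
    (hη : ∀ t : ℕ, 1 ≤ t → η t = η₀ / (t : ℝ) ^ ((2 : ℝ) / 3))
    (x e : ℕ → ℝ)
    (j : ℕ → ℝ) (hj : ∀ t : ℕ, t ≤ T → |j t| ≤ CJ)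
    (hstep : ∀ t : ℕ, t ≤ T - 1 →
      x t ≤ 8 * e t + 3 * σB / 2 * η t + (3 / η t) * (j (t + 1) - j t))
    (hesum : ∑ t ∈ Finset.range T, e t ≤ Real.sqrt C * (T : ℝ) ^ ((2 : ℝ) / 3)) :
    (1 / (T : ℝ)) * ∑ t ∈ Finset.range T, x t
      ≤ 8 * Real.sqrt C / (T : ℝ) ^ ((1 : ℝ) / 3)
        + 6 * σB * η₀ / (T : ℝ) ^ ((2 : ℝ) / 3)
        + 9 * CJ / (η₀ * (T : ℝ) ^ ((1 : ℝ) / 3)) := by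
  obtain rfl : η = stepSchedule η₀ := eq_stepSchedule hη0 hη
  obtain ⟨n, rfl⟩ : ∃ n, T = n + 1 := ⟨T - 1, by omega⟩
  push_cast at hesum ⊢
  set a := ((n : ℝ) + 1) ^ ((1 : ℝ) / 3)
  set b := ((n : ℝ) + 1) ^ ((2 : ℝ) / 3)
  have ha : 0 < a := by positivity
  have hb : 0 < b := by positivity
  have hab : a * b = (n : ℝ) + 1 := by
    rw [← Real.rpow_add (by positivity)]; norm_num
  have hsum : ∑ t ∈ range (n + 1), x t ≤ 8 * ∑ t ∈ range (n + 1), e t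
      + 3 * σB / 2 * ∑ t ∈ range (n + 1), stepSchedule η₀ t
      + 3 * ∑ t ∈ range (n + 1), (j (t + 1) - j t) / stepSchedule η₀ t := by
    simp only [mul_sum, ← sum_add_distrib]
    exact sum_le_sum fun t ht => (hstep t (by simp at ht; omega)).trans_eq (by ring)
  have hη_sum : ∑ t ∈ range (n + 1), stepSchedule η₀ t ≤ 4 * η₀ * a :=
    sum_range_stepSchedule_le hη₀.le n
  have htel : ∑ t ∈ range (n + 1), (j (t + 1) - j t) / stepSchedule η₀ t ≤ 2 * (CJ * b / η₀) :=
    calc _ ≤ 2 * CJ / stepSchedule η₀ n :=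
          sum_range_sub_div_le_two_mul_div (stepSchedule_pos hη₀) (stepSchedule_antitone hη₀.le)
            n hj
      _ ≤ 2 * CJ * (((n : ℝ) + 1) ^ ((2 : ℝ) / 3) / η₀) := by
          rw [div_eq_mul_inv]; gcongr; exact inv_stepSchedule_le hη₀ n
      _ = 2 * (CJ * b / η₀) := by ring
  calc 1 / ((n : ℝ) + 1) * ∑ t ∈ range (n + 1), x t
      ≤ 1 / (a * b) * (8 * √C * b + 6 * σB * η₀ * a + 6 * (CJ * b / η₀)) := by
        rw [hab]; gcongr
        linarith [mul_le_mul_of_nonneg_left hη_sum hσB]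
    _ = 8 * √C / a + 6 * σB * η₀ / b + 6 * CJ / (η₀ * a) := by field_simp
    _ ≤ 8 * √C / a + 6 * σB * η₀ / b + 9 * CJ / (η₀ * a) := by gcongr; norm_num

/-- Final averaging step in the proof of Theorem 1. -/
theorem sharp_final_average
    (η₀ : ℝ) (hη₀ : 0 < η₀) (σB C CJ : ℝ) (hσB : 0 ≤ σB) (hC : 0 ≤ C)
    (hCJ : 0 ≤ CJ) (T : ℕ) (hT : 1 ≤ T)
    (η : ℕ → ℝ) (hη0 : η 0 = η₀)
    (hη : ∀ t : ℕ, 1 ≤ t → η t = η₀ / (t : ℝ) ^ ((2 : ℝ) / 3))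
    (x e : ℕ → ℝ) (hx : ∀ t, 0 ≤ x t) (he : ∀ t, 0 ≤ e t)
    (j : ℕ → ℝ) (hj : ∀ t : ℕ, t ≤ T → |j t| ≤ CJ)
    (hstep : ∀ t : ℕ, t ≤ T - 1 →
      x t ≤ 8 * e t + 3 * σB / 2 * η t + (3 / η t) * (j (t + 1) - j t))
    (hesum : ∑ t ∈ Finset.range T, e t ≤ Real.sqrt C * (T : ℝ) ^ ((2 : ℝ) / 3)) :
    (1 / (T : ℝ)) * ∑ t ∈ Finset.range T, x t
      ≤ 8 * Real.sqrt C / (T : ℝ) ^ ((1 : ℝ) / 3)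
        + 6 * σB * η₀ / (T : ℝ) ^ ((2 : ℝ) / 3)
        + 9 * CJ / (η₀ * (T : ℝ) ^ ((1 : ℝ) / 3)) :=
  sharp_final_average_general η₀ hη₀ σB C CJ hσB hCJ T hT η hη0 hη x e j hj hstep hesum
end

section
/- Let α₀ ∈ (2/3, 1] and C > 0, and let Z : ℕ → ℝ satisfy Z_t ≥ 0 for all t ≥ 1, Z_1 ≤ C/(α₀ − 2/3), and Z_t ≤ (1 − α₀/t^{2/3}) Z_{t−1} + C/t^{4/3} for all t ≥ 2. Then for all t ≥ 1: Z_t ≤ (C/(α₀ − 2/3)) · (1/t^{2/3}). -/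
private lemma cube_le_cube {x y : ℝ} (_ : 0 ≤ x) (hy : 0 ≤ y) (h : x ^ 3 ≤ y ^ 3) :
    x ≤ y := le_of_pow_le_pow_left₀ (by norm_num) hy h

set_option maxHeartbeats 1000000 in
/-- Induction lemma in Appendix B (proof of Remark 3). -/
theorem sharp_decay_induction
    (α₀ : ℝ) (hα₀ : α₀ ∈ Set.Ioc (2 / 3 : ℝ) 1) (C : ℝ) (hC : 0 < C)
    (Z : ℕ → ℝ) (hZ : ∀ t : ℕ, 1 ≤ t → 0 ≤ Z t)
    (hZ1 : Z 1 ≤ C / (α₀ - 2 / 3))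
    (hrec : ∀ t : ℕ, 2 ≤ t →
      Z t ≤ (1 - α₀ / (t : ℝ) ^ ((2 : ℝ) / 3)) * Z (t - 1)
        + C / (t : ℝ) ^ ((4 : ℝ) / 3)) :
    ∀ t : ℕ, 1 ≤ t → Z t ≤ C / (α₀ - 2 / 3) * (1 / (t : ℝ) ^ ((2 : ℝ) / 3)) := by
  obtain ⟨hα1, hα2⟩ := hα₀
  set K : ℝ := C / (α₀ - 2 / 3) with hKdef
  have hαpos : 0 < α₀ - 2 / 3 := by linarith
  have hK : 0 < K := div_pos hC hαpos
  have hCK : C = K * (α₀ - 2 / 3) := by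
    rw [hKdef, div_mul_cancel₀ _ hαpos.ne']
  clear_value K
  intro t ht
  induction t, ht using Nat.le_induction with
  | base => simp only [Nat.cast_one, Real.one_rpow, div_one, mul_one]; exact hZ1
  | succ t ht IH =>
    have hu1 : (1 : ℝ) ≤ (t : ℝ) := by exact_mod_cast ht
    set u : ℝ := (t : ℝ) with hudef
    have hu0 : (0 : ℝ) < u := by linarith
    set s : ℝ := u + 1 with hsdef
    have hs2 : (2 : ℝ) ≤ s := by linarith
    have hs0 : (0 : ℝ) < s := by linarith
    set a : ℝ := s ^ ((2 : ℝ) / 3) with hadef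
    set b : ℝ := u ^ ((2 : ℝ) / 3) with hbdef
    have ha0 : 0 < a := Real.rpow_pos_of_pos hs0 _
    have hb0 : 0 < b := Real.rpow_pos_of_pos hu0 _
    have ha1 : (1 : ℝ) ≤ a := by
      have := Real.rpow_le_rpow (by norm_num : (0:ℝ) ≤ 1) (by linarith : (1:ℝ) ≤ s)
        (by norm_num : (0:ℝ) ≤ (2:ℝ)/3)
      simpa [hadef] using this
    have hba : b ≤ a :=
      Real.rpow_le_rpow hu0.le (by linarith) (by norm_num)
    have ha3 : a ^ 3 = s ^ 2 := by
      rw [hadef, ← Real.rpow_natCast (s ^ ((2:ℝ)/3)) 3, ← Real.rpow_mul hs0.le]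
      norm_num
    have hb3 : b ^ 3 = u ^ 2 := by
      rw [hbdef, ← Real.rpow_natCast (u ^ ((2:ℝ)/3)) 3, ← Real.rpow_mul hu0.le]
      norm_num
    have ha2 : s ^ ((4 : ℝ) / 3) = a ^ 2 := by
      rw [hadef, ← Real.rpow_natCast (s ^ ((2:ℝ)/3)) 2, ← Real.rpow_mul hs0.le]
      norm_num
    -- Key fact 1 : a ≤ u + α₀
    have key1 : a ≤ u + α₀ := by
      apply cube_le_cube ha0.le (by linarith)
      rw [ha3, hsdef]
      nlinarith [pow_le_pow_left₀ (by linarith : (0:ℝ) ≤ u + 2/3)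
        (by linarith : u + 2/3 ≤ u + α₀) 3, sq_nonneg (u - 1),
        mul_nonneg (by linarith : (0:ℝ) ≤ u - 1) (sq_nonneg u)]
    -- Key fact 2 : u * a ≤ b * (u + 2/3)
    have key2 : u * a ≤ b * (u + 2 / 3) := by
      apply cube_le_cube (by positivity) (by positivity)
      have e1 : (u * a) ^ 3 = u ^ 3 * a ^ 3 := by ring
      have e2 : (b * (u + 2 / 3)) ^ 3 = b ^ 3 * (u + 2 / 3) ^ 3 := by ring
      rw [e1, e2, ha3, hb3]
      nlinarith [sq_nonneg u, hu0.le, hsdef]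
    -- the recursion at t+1
    have hrec' := hrec (t + 1) (by omega)
    have hcast : ((t + 1 : ℕ) : ℝ) = s := by push_cast [hsdef, hudef]; ring
    rw [show t + 1 - 1 = t from rfl, hcast, ha2, ← hadef] at hrec'
    have hwnn : 0 ≤ 1 - α₀ / a := by
      rw [sub_nonneg]
      exact (div_le_one ha0).2 (by linarith)
    have hZt : 0 ≤ Z t := hZ t ht
    have hmid : Z (t + 1) ≤ (1 - α₀ / a) * (K * (1 / b)) + C / a ^ 2 :=
      hrec'.trans (by gcongr)
    refine hmid.trans ?_
    rw [hcast, ← hadef]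
    clear hrec hrec' hmid IH hZ hZ1 hZt ha3 hb3 ha2 hcast hadef hbdef hsdef hudef
    clear_value a b s u
    -- reduce to polynomial inequality
    rw [← sub_nonneg]
    have hexp : K * (1 / a) - ((1 - α₀ / a) * (K * (1 / b)) + C / a ^ 2) =
        (K * a * b - (K * a * (a - α₀) + C * b)) / (a ^ 2 * b) := by
      field_simp
    rw [hexp]
    apply div_nonneg _ (by positivity)
    rw [sub_nonneg, hCK]
    have hprod : 0 ≤ (a - b) * (u - (a - α₀)) :=
      mul_nonneg (sub_nonneg.2 hba) (by linarith)
    have hpoly : a * (a - α₀) + (α₀ - 2 / 3) * b ≤ a * b := by linarith [key2, hprod]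
    have hfin := mul_le_mul_of_nonneg_left hpoly hK.le
    linarith [hfin]
end

section
/- Let α₀ ∈ (2/3, 1], η₀ > 0, and σ_B, σ_g ≥ 0. Define α : ℕ → ℝ by α_t = α₀/t^{2/3} for t ≥ 1, and η : ℕ → ℝ by η_0 = η₀ and η_t = η₀/t^{2/3} for t ≥ 1. Let e : ℕ → ℝ satisfy e_t ≥ 0 for all t, e_0 ≤ σ_g², and for all t ≥ 1: e_t ≤ (1 − α_t) e_{t−1} + 8σ_B² η_{t−1}² + 2α_t² σ_g². Then for all t ≥ 1: e_t ≤ C_Z/((α₀ − 2/3) · t^{2/3}), where C_Z = 8 · 2^{4/3} η₀² σ_B² + 2α₀² σ_g². -/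
private lemma cube23 (x : ℝ) (hx : 0 ≤ x) : (x ^ ((2:ℝ)/3)) ^ (3:ℕ) = x ^ (2:ℕ) := by
  rw [← Real.rpow_natCast (x ^ ((2:ℝ)/3)) 3, ← Real.rpow_mul hx, ← Real.rpow_natCast x 2]
  norm_num

set_option maxHeartbeats 1000000 in
/-- Remark 3 of the paper in deterministic sequence form: the expected squared
SHARP error decays at rate O(1/t^{2/3}). -/
theorem sharp_error_decay
    (α₀ : ℝ) (hα₀ : α₀ ∈ Set.Ioc (2 / 3 : ℝ) 1)
    (η₀ : ℝ) (hη₀ : 0 < η₀) (σB σg : ℝ) (hσB : 0 ≤ σB) (hσg : 0 ≤ σg)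
    (α : ℕ → ℝ) (hα : ∀ t : ℕ, 1 ≤ t → α t = α₀ / (t : ℝ) ^ ((2 : ℝ) / 3))
    (η : ℕ → ℝ) (hη0 : η 0 = η₀)
    (hη : ∀ t : ℕ, 1 ≤ t → η t = η₀ / (t : ℝ) ^ ((2 : ℝ) / 3))
    (e : ℕ → ℝ) (he : ∀ t, 0 ≤ e t) (he0 : e 0 ≤ σg ^ 2)
    (hrec : ∀ t : ℕ, 1 ≤ t →
      e t ≤ (1 - α t) * e (t - 1) + 8 * σB ^ 2 * (η (t - 1)) ^ 2
        + 2 * (α t) ^ 2 * σg ^ 2) :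
    ∀ t : ℕ, 1 ≤ t →
      e t ≤ (8 * 2 ^ ((4 : ℝ) / 3) * η₀ ^ 2 * σB ^ 2 + 2 * α₀ ^ 2 * σg ^ 2)
        / ((α₀ - 2 / 3) * (t : ℝ) ^ ((2 : ℝ) / 3)) := by
  obtain ⟨hα₀l, hα₀u⟩ := hα₀
  have hD : (0:ℝ) < α₀ - 2/3 := by linarith
  have h24 : (2:ℝ) ≤ 2 ^ ((4:ℝ)/3) := by
    calc (2:ℝ) = 2 ^ (1:ℝ) := (Real.rpow_one 2).symm
    _ ≤ 2 ^ ((4:ℝ)/3) := Real.rpow_le_rpow_of_exponent_le (by norm_num) (by norm_num)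
  set C : ℝ := 8 * 2 ^ ((4:ℝ)/3) * η₀ ^ 2 * σB ^ 2 + 2 * α₀ ^ 2 * σg ^ 2 with hCdef
  clear_value C
  have hCnn : 0 ≤ C := by rw [hCdef]; positivity
  intro t ht
  induction t, ht using Nat.le_induction with
  | base =>
    have hb := hrec 1 le_rfl
    rw [hα 1 le_rfl] at hb
    simp only [Nat.cast_one, Real.one_rpow, div_one] at hb ⊢
    rw [mul_one, le_div_iff₀ hD]
    have h1 : (1 - α₀) * e 0 ≤ (1 - α₀) * σg ^ 2 :=
      mul_le_mul_of_nonneg_left he0 (by linarith)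
    simp only [hη0] at hb
    have hK : e 1 ≤ (1 - α₀) * σg ^ 2 + 8 * σB ^ 2 * η₀ ^ 2 + 2 * α₀ ^ 2 * σg ^ 2 := by
      linarith
    have hp : (0:ℝ) ≤ σB ^ 2 * η₀ ^ 2 := mul_nonneg (sq_nonneg _) (sq_nonneg _)
    have hq : (0:ℝ) ≤ σg ^ 2 := sq_nonneg _
    -- e 1 * D ≤ K * D
    have hKD : e 1 * (α₀ - 2/3)
        ≤ ((1 - α₀) * σg ^ 2 + 8 * σB ^ 2 * η₀ ^ 2 + 2 * α₀ ^ 2 * σg ^ 2) * (α₀ - 2/3) :=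
      mul_le_mul_of_nonneg_right hK (by linarith)
    -- bound each piece of K * D
    have hd13 : (1 - α₀) * (α₀ - 2/3) ≤ 1/9 := by nlinarith [sq_nonneg (α₀ - 5/6)]
    have term1 : (1 - α₀) * σg ^ 2 * (α₀ - 2/3) ≤ (1/9) * σg ^ 2 := by
      have := mul_le_mul_of_nonneg_right hd13 hq
      nlinarith [this]
    have term2 : 8 * σB ^ 2 * η₀ ^ 2 * (α₀ - 2/3) ≤ 8 * 2 ^ ((4:ℝ)/3) * η₀ ^ 2 * σB ^ 2 := by
      have h8 : (0:ℝ) ≤ 8 * (σB ^ 2 * η₀ ^ 2) := by positivity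
      have := mul_le_mul_of_nonneg_left (show α₀ - 2/3 ≤ 2 ^ ((4:ℝ)/3) by linarith) h8
      nlinarith [this]
    have term3 : 2 * α₀ ^ 2 * σg ^ 2 * (α₀ - 2/3) ≤ (2/3) * (α₀ ^ 2 * σg ^ 2) := by
      have hA : (0:ℝ) ≤ α₀ ^ 2 * σg ^ 2 := mul_nonneg (sq_nonneg _) hq
      have := mul_le_mul_of_nonneg_left (show α₀ - 2/3 ≤ 1/3 by linarith) hA
      nlinarith [this]
    have hα2 : 4/9 ≤ α₀ ^ 2 := by nlinarith [sq_nonneg (α₀ - 2/3)]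
    have hα2q : (4/9) * σg ^ 2 ≤ α₀ ^ 2 * σg ^ 2 := mul_le_mul_of_nonneg_right hα2 hq
    rw [hCdef]
    linarith
  | succ n hn ih =>
    have hn0 : (0:ℝ) < (n:ℝ) := by exact_mod_cast Nat.lt_of_lt_of_le Nat.zero_lt_one hn
    have hn1 : (1:ℝ) ≤ (n:ℝ) := by exact_mod_cast hn
    have hcast : ((n+1:ℕ):ℝ) = (n:ℝ) + 1 := by push_cast; ring
    set b : ℝ := (n:ℝ) ^ ((2:ℝ)/3) with hbdef
    set a : ℝ := ((n:ℝ) + 1) ^ ((2:ℝ)/3) with hadef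
    clear_value b a
    have hb1 : (1:ℝ) ≤ b := by rw [hbdef]; exact Real.one_le_rpow hn1 (by norm_num)
    have ha1 : (1:ℝ) ≤ a := by rw [hadef]; exact Real.one_le_rpow (by linarith) (by norm_num)
    have hb0 : (0:ℝ) < b := by linarith
    have ha0 : (0:ℝ) < a := by linarith
    have hcb : b ^ (3:ℕ) = (n:ℝ) ^ (2:ℕ) := by rw [hbdef]; exact cube23 _ (by linarith)
    have hca : a ^ (3:ℕ) = ((n:ℝ)+1) ^ (2:ℕ) := by rw [hadef]; exact cube23 _ (by linarith)
    -- P1 : a ≤ (1 + 2/(3n)) * b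
    have P1 : a ≤ (1 + 2/(3*(n:ℝ))) * b := by
      refine (pow_le_pow_iff_left₀ (by linarith) (by positivity) (three_ne_zero)).mp ?_
      rw [mul_pow, hca, hcb]
      have h27 : ((1 + 2/(3*(n:ℝ))) ^ (3:ℕ)) * (n:ℝ)^(2:ℕ) =
          (3*(n:ℝ)+2)^(3:ℕ) / (27 * (n:ℝ)) := by
        field_simp
        ring
      rw [h27, le_div_iff₀ (by positivity)]
      nlinarith [hn0]
    -- P2 : a ≤ n + 2/3
    have P2 : a ≤ (n:ℝ) + 2/3 := by
      refine (pow_le_pow_iff_left₀ (by linarith) (by linarith) (three_ne_zero)).mp ?_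
      rw [hca]
      have a1 : (0:ℝ) ≤ (n:ℝ) * ((n:ℝ) - 1) := mul_nonneg (by linarith) (by linarith)
      have a2 : (0:ℝ) ≤ (n:ℝ)^2 * ((n:ℝ) - 1) := mul_nonneg (sq_nonneg _) (by linarith)
      nlinarith [a1, a2]
    -- P3 : a^2 ≤ 2^(4/3) * b^2
    have P3 : a ^ 2 ≤ 2 ^ ((4:ℝ)/3) * b ^ 2 := by
      have h1 : a ≤ 2 ^ ((2:ℝ)/3) * b := by
        rw [hadef, hbdef, ← Real.mul_rpow (by norm_num) (by linarith)]
        exact Real.rpow_le_rpow (by linarith) (by linarith) (by norm_num)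
      have h2 : ((2:ℝ)^((2:ℝ)/3))^(2:ℕ) = 2^((4:ℝ)/3) := by
        rw [← Real.rpow_natCast ((2:ℝ)^((2:ℝ)/3)) 2, ← Real.rpow_mul (by norm_num)]
        norm_num
      calc a ^ 2 ≤ (2 ^ ((2:ℝ)/3) * b) ^ 2 := by
            apply pow_le_pow_left₀ (by linarith) h1
      _ = 2^((4:ℝ)/3) * b ^ 2 := by rw [mul_pow, h2]
    have hab : b ≤ a := by rw [hadef, hbdef]; exact Real.rpow_le_rpow (by linarith) (by linarith) (by norm_num)
    have haα : 0 ≤ a - α₀ := by linarith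
    have P : (a - b) * (a - α₀) ≤ (2/3) * b := by
      have h1 : a - b ≤ 2*b/(3*(n:ℝ)) := by
        have hx : (1 + 2/(3*(n:ℝ))) * b = b + 2*b/(3*(n:ℝ)) := by field_simp
        rw [hx] at P1; linarith
      have h2 : a - α₀ ≤ (n:ℝ) := by linarith [P2]
      calc (a - b) * (a - α₀) ≤ (2*b/(3*(n:ℝ))) * (n:ℝ) := by
            apply mul_le_mul h1 h2 haα (by positivity)
      _ = (2/3) * b := by field_simp
    -- rewrite the recursion
    have hr := hrec (n+1) (by omega)
    simp only [Nat.add_sub_cancel] at hr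
    rw [hα (n+1) (by omega), hη n hn, hcast, ← hadef, ← hbdef] at hr
    have hαa : α₀ / a ≤ 1 := by rw [div_le_one ha0]; linarith
    have hαa0 : 0 ≤ α₀ / a := by positivity
    have t1 : (1 - α₀/a) * e n ≤ (1 - α₀/a) * (C / ((α₀ - 2/3) * b)) :=
      mul_le_mul_of_nonneg_left ih (by linarith)
    have t2 : 8 * σB^2 * (η₀/b)^2 ≤ 8 * 2^((4:ℝ)/3) * η₀^2 * σB^2 / a^2 := by
      have hEq : 8 * σB^2 * (η₀/b)^2 = 8 * σB^2 * η₀^2 / b^2 := by rw [div_pow]; ring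
      rw [hEq, div_le_div_iff₀ (by positivity) (by positivity)]
      have h8 : (0:ℝ) ≤ 8 * (σB ^ 2 * η₀ ^ 2) := by positivity
      have := mul_le_mul_of_nonneg_left P3 h8
      nlinarith [this]
    have t3 : 2 * (α₀/a)^2 * σg^2 = 2 * α₀^2 * σg^2 / a^2 := by
      rw [div_pow]; ring
    have hsum : 8 * 2^((4:ℝ)/3) * η₀^2 * σB^2 / a^2 + 2 * α₀^2 * σg^2 / a^2 = C / a^2 := by
      rw [hCdef, add_div]
    have hstep : e (n+1) ≤ (1 - α₀/a) * (C / ((α₀ - 2/3) * b)) + C / a^2 := by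
      have := hr
      rw [t3] at this
      linarith [t1, t2]
    -- final comparison
    rw [hcast, ← hadef]
    obtain ⟨D, hDdef⟩ : ∃ D : ℝ, D = α₀ - 2/3 := ⟨_, rfl⟩
    rw [← hDdef] at hD hstep ⊢
    have hDne : D ≠ 0 := ne_of_gt hD
    have hane : a ≠ 0 := ne_of_gt ha0
    have hbne : b ≠ 0 := ne_of_gt hb0
    have hkey : C * (a^2 - α₀*a + D*b) ≤ C * (a*b) := by
      apply mul_le_mul_of_nonneg_left _ hCnn
      rw [hDdef]
      have hexp : a^2 - α₀*a + (α₀ - 2/3)*b = (a-b)*(a-α₀) + a*b - (2/3)*b := by ring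
      linarith [P, hexp]
    have e1 : (1 - α₀/a) * (C / (D * b)) + C / a^2
        = C * (a^2 - α₀*a + D*b) / (D * a^2 * b) := by
      field_simp
    have e2 : C / (D * a) = C * (a*b) / (D * a^2 * b) := by
      field_simp
    have hfin : (1 - α₀/a) * (C / (D * b)) + C / a^2 ≤ C / (D * a) := by
      rw [e1, e2]
      exact (div_le_div_iff_of_pos_right (by positivity)).mpr hkey
    linarith [hstep, hfin]
end
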